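/- arXiv:1907.02446 — 2 statements merged into one kernel-verified Lean document; each statement's English description precedes it below -/
import Mathlib

section
/- If (X,f) is a compact metric dynamical system with shadowing, then the induced system (F_2(X), f_2) on the 2-fold symmetric product has shadowing. -/
open Filter Topology TopologicalSpace

/-- The induced map on the hyperspace of nonempty compact subsets. -/
def hyperMap {X : Type*} [MetricSpace X] (f : X → X) (hf : Continuous f) :
    NonemptyCompacts X → NonemptyCompacts X :=
  fun A => ⟨⟨f '' A, A.isCompact.image hf⟩, A.nonempty.image f⟩

/-- A member of the 2-fold symmetric product `F₂(X)`. -/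
def IsF2 {X : Type*} [MetricSpace X] (A : NonemptyCompacts X) : Prop :=
  ∃ a b : X, (A : Set X) = {a, b}

lemma match2 {X : Type*} [MetricSpace X] {p q c d : X} {δ : ℝ}
    (h1 : ∀ x ∈ ({p, q} : Set X), ∃ y ∈ ({c, d} : Set X), dist x y < δ)
    (h2 : ∀ y ∈ ({c, d} : Set X), ∃ x ∈ ({p, q} : Set X), dist x y < δ) :
    ∃ c' d' : X, ({c', d'} : Set X) = {c, d} ∧ dist p c' < δ ∧ dist q d' < δ := by
  have hp : dist p c < δ ∨ dist p d < δ := by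
    rcases h1 p (by simp) with ⟨y, hy, hd⟩
    rcases hy with rfl | rfl
    · exact Or.inl hd
    · exact Or.inr hd
  have hq : dist q c < δ ∨ dist q d < δ := by
    rcases h1 q (by simp) with ⟨y, hy, hd⟩
    rcases hy with rfl | rfl
    · exact Or.inl hd
    · exact Or.inr hd
  by_cases hpc : dist p c < δ
  · by_cases hqd : dist q d < δ
    · exact ⟨c, d, rfl, hpc, hqd⟩
    · -- then q is near c, and d must be near p
      have hqc : dist q c < δ := hq.resolve_right hqd
      have hpd : dist p d < δ := by
        rcases h2 d (by simp) with ⟨x, hx, hd⟩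
        rcases hx with rfl | rfl
        · exact hd
        · exact absurd hd hqd
      exact ⟨d, c, Set.pair_comm d c, hpd, hqc⟩
  · have hpd : dist p d < δ := hp.resolve_left hpc
    have hqc : dist q c < δ := by
      rcases h2 c (by simp) with ⟨x, hx, hd⟩
      rcases hx with rfl | rfl
      · exact absurd hd hpc
      · exact hd
    exact ⟨d, c, Set.pair_comm d c, hpd, hqc⟩

lemma hyperMap_iterate_coe {X : Type*} [MetricSpace X] (f : X → X) (hf : Continuous f)
    (n : ℕ) (B : NonemptyCompacts X) :
    (((hyperMap f hf)^[n] B : NonemptyCompacts X) : Set X) = f^[n] '' (B : Set X) := by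
  induction n with
  | zero => simp
  | succ n ih =>
    rw [Function.iterate_succ_apply']
    show f '' (((hyperMap f hf)^[n] B : NonemptyCompacts X) : Set X) = _
    rw [ih, ← Set.image_comp, ← Function.iterate_succ' f n]

/-- shadowing of (X, f) implies shadowing of the induced system on the
2-fold symmetric product F₂(X) (with the Hausdorff metric). -/
theorem shadowing_F2_of_shadowing
    {X : Type*} [MetricSpace X] [CompactSpace X]
    (f : X → X) (hf : Continuous f)
    (hsh : ∀ ε > (0:ℝ), ∃ δ > (0:ℝ), ∀ x : ℕ → X,
      (∀ i, dist (f (x i)) (x (i + 1)) < δ) →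
      ∃ z : X, ∀ i, dist (f^[i] z) (x i) < ε) :
    ∀ ε > (0:ℝ), ∃ δ > (0:ℝ), ∀ A : ℕ → NonemptyCompacts X,
      (∀ i, IsF2 (A i)) →
      (∀ i, dist (hyperMap f hf (A i)) (A (i + 1)) < δ) →
      ∃ B : NonemptyCompacts X, IsF2 B ∧
        ∀ i, dist ((hyperMap f hf)^[i] B) (A i) < ε := by
  intro ε hε
  obtain ⟨δ, hδ, hδsh⟩ := hsh (ε / 2) (by linarith)
  refine ⟨δ, hδ, fun A hA2 hAps => ?_⟩
  -- key step : matching pairs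
  have key : ∀ i (p : X × X), (A i : Set X) = {p.1, p.2} →
      ∃ q : X × X, (A (i + 1) : Set X) = {q.1, q.2} ∧
        dist (f p.1) q.1 < δ ∧ dist (f p.2) q.2 < δ := by
    intro i p hp
    obtain ⟨c, d, hcd⟩ := hA2 (i + 1)
    have hdist : Metric.hausdorffDist (f '' (A i : Set X)) ((A (i+1) : Set X)) < δ := by
      have := hAps i
      rwa [Metric.NonemptyCompacts.dist_eq] at this
    have hfin : EMetric.hausdorffEdist (f '' (A i : Set X)) ((A (i+1) : Set X)) ≠ ⊤ :=
      Metric.hausdorffEdist_ne_top_of_nonempty_of_bounded ((A i).nonempty.image f)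
        (A (i+1)).nonempty (((A i).isCompact.image hf).isBounded)
        ((A (i+1)).isCompact.isBounded)
    have himg : f '' (A i : Set X) = {f p.1, f p.2} := by
      rw [hp, Set.image_pair]
    rw [himg, hcd] at hdist hfin
    have h1 : ∀ x ∈ ({f p.1, f p.2} : Set X), ∃ y ∈ ({c, d} : Set X), dist x y < δ :=
      fun x hx => Metric.exists_dist_lt_of_hausdorffDist_lt hx hdist hfin
    have h2 : ∀ y ∈ ({c, d} : Set X), ∃ x ∈ ({f p.1, f p.2} : Set X), dist x y < δ :=
      fun y hy => Metric.exists_dist_lt_of_hausdorffDist_lt' hy hdist hfin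
    obtain ⟨c', d', hcd', h1', h2'⟩ := match2 h1 h2
    exact ⟨(c', d'), by rw [hcd, ← hcd'], h1', h2'⟩
  obtain ⟨a0, b0, h0⟩ := hA2 0
  -- recursively construct the pseudo-orbits
  let step : ∀ i, {p : X × X // (A i : Set X) = {p.1, p.2}} →
      {p : X × X // (A (i+1) : Set X) = {p.1, p.2}} :=
    fun i p => ⟨(key i p.1 p.2).choose, (key i p.1 p.2).choose_spec.1⟩
  let g : ∀ i, {p : X × X // (A i : Set X) = {p.1, p.2}} :=
    fun i => Nat.rec ⟨(a0, b0), h0⟩ step i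
  have hgs : ∀ i, g (i + 1) = step i (g i) := fun i => rfl
  have hstep : ∀ i, dist (f ((g i).1).1) ((g (i+1)).1).1 < δ ∧
      dist (f ((g i).1).2) ((g (i+1)).1).2 < δ := by
    intro i
    rw [hgs i]
    exact (key i ((g i).1) ((g i).2)).choose_spec.2
  obtain ⟨za, hza⟩ := hδsh (fun i => ((g i).1).1) (fun i => (hstep i).1)
  obtain ⟨zb, hzb⟩ := hδsh (fun i => ((g i).1).2) (fun i => (hstep i).2)
  refine ⟨⟨⟨{za, zb}, (Set.toFinite _).isCompact⟩, ⟨za, by simp⟩⟩, ⟨za, zb, rfl⟩, ?_⟩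
  intro i
  rw [Metric.NonemptyCompacts.dist_eq]
  have hBcoe : (((hyperMap f hf)^[i] ⟨⟨{za, zb}, (Set.toFinite _).isCompact⟩, ⟨za, by simp⟩⟩ :
      NonemptyCompacts X) : Set X) = {f^[i] za, f^[i] zb} := by
    rw [hyperMap_iterate_coe]
    exact Set.image_pair _ _ _
  rw [hBcoe, (g i).2]
  have hle : Metric.hausdorffDist ({f^[i] za, f^[i] zb} : Set X)
      ({((g i).1).1, ((g i).1).2} : Set X) ≤ ε / 2 := by
    apply Metric.hausdorffDist_le_of_mem_dist (by linarith)
    · intro x hx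
      rcases hx with rfl | rfl
      · exact ⟨((g i).1).1, by simp, (hza i).le⟩
      · exact ⟨((g i).1).2, by simp, (hzb i).le⟩
    · intro y hy
      rcases hy with rfl | rfl
      · exact ⟨f^[i] za, by simp, by rw [dist_comm]; exact (hza i).le⟩
      · exact ⟨f^[i] zb, by simp, by rw [dist_comm]; exact (hzb i).le⟩
  linarith
end

section
/- Let α be irrational and f : ℝ/ℤ → ℝ/ℤ the rotation x ↦ x + α. Then the induced hyperspace system (2^{ℝ/ℤ}, 2^f) does not have first weak shadowing (hence neither orbital nor strong orbital shadowing). -/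
/-! A rotation is an isometry, so the induced map preserves diameters along every orbit in the
hyperspace, while sets at Hausdorff distance `< ε` have diameters differing by less than `2ε`.
A δ-pseudo-orbit, however, can widen an arc around the orbit of a point by `δ/2` per step, from
a singleton (diameter `0`) to the whole circle (diameter `1/2`): no single orbit can shadow both
ends. -/

open Filter Topology TopologicalSpace

open Metric Set

theorem Isometry.iterate {X : Type*} [PseudoEMetricSpace X] {f : X → X} (hf : Isometry f) :
    ∀ n, Isometry f^[n]
  | 0 => isometry_id
  | n + 1 => (hf.iterate n).comp hf

theorem hausdorffDist_image_Icc_le {X : Type*} [PseudoMetricSpace X] {π : ℝ → X}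
    (hπ : LipschitzWith 1 π) (c : ℝ) {ρ σ : ℝ} (hρ : 0 ≤ ρ) (hρσ : ρ ≤ σ) :
    hausdorffDist (π '' Icc (c - ρ) (c + ρ)) (π '' Icc (c - σ) (c + σ)) ≤ σ - ρ := by
  have hdist : ∀ s t, dist (π s) (π t) ≤ |s - t| := fun s t => by
    simpa [Real.dist_eq] using hπ.dist_le_mul s t
  refine hausdorffDist_le_of_mem_dist (by linarith) ?_ ?_
  · rintro _ ⟨t, ht, rfl⟩
    exact ⟨π t, mem_image_of_mem π ⟨by linarith [ht.1], by linarith [ht.2]⟩, by simp [hρσ]⟩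
  · rintro _ ⟨t, ht, rfl⟩
    set t' := max (c - ρ) (min t (c + ρ))
    have htt' : |t - t'| ≤ σ - ρ := by
      rcases le_total t (c - ρ) with h | h
      · rw [show t' = c - ρ from max_eq_left (min_le_of_left_le h), abs_le]
        constructor <;> linarith [ht.1]
      rcases le_total t (c + ρ) with h' | h'
      · rw [show t' = t by simp [t', h, h'], sub_self, abs_zero]
        linarith
      · have ht' : t' = c + ρ := by
          simp only [t', min_eq_right h']
          exact max_eq_right (by linarith)
        rw [ht', abs_le]
        constructor <;> linarith [ht.2]
    exact ⟨π t', mem_image_of_mem π ⟨le_max_left _ _, max_le (by linarith) (min_le_right _ _)⟩,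
      (hdist t t').trans htt'⟩

section Hyperspace

variable {X : Type*} [MetricSpace X]

theorem coe_hyperMap_iterate (f : X → X) (hf : Continuous f) (B : NonemptyCompacts X) (n : ℕ) :
    ((hyperMap f hf)^[n] B : Set X) = f^[n] '' B := by
  induction n with
  | zero => simp
  | succ n ih =>
    rw [Function.iterate_succ_apply', Function.iterate_succ', image_comp, ← ih]
    rfl

theorem diam_hyperMap_iterate {f : X → X} (hf : Isometry f) (hf' : Continuous f)
    (B : NonemptyCompacts X) (n : ℕ) :
    diam ((hyperMap f hf')^[n] B : Set X) = diam (B : Set X) := by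
  rw [coe_hyperMap_iterate, (hf.iterate n).diam_image]

theorem NonemptyCompacts.diam_le_diam_add_of_dist_lt {K L : NonemptyCompacts X} {ε : ℝ}
    (h : dist K L < ε) : diam (L : Set X) ≤ diam (K : Set X) + 2 * ε := by
  rw [NonemptyCompacts.dist_eq] at h
  have hfin : hausdorffEDist (K : Set X) L ≠ ⊤ :=
    hausdorffEDist_ne_top_of_nonempty_of_bounded K.nonempty L.nonempty
      K.isCompact.isBounded L.isCompact.isBounded
  have hε : 0 ≤ ε := hausdorffDist_nonneg.trans h.le
  refine diam_le_of_forall_dist_le (by positivity) fun x hx y hy => ?_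
  obtain ⟨x', hx', hxx'⟩ := exists_dist_lt_of_hausdorffDist_lt' hx h hfin
  obtain ⟨y', hy', hyy'⟩ := exists_dist_lt_of_hausdorffDist_lt' hy h hfin
  have hx'y' := dist_le_diam_of_mem K.isCompact.isBounded hx' hy'
  linarith [dist_triangle4 x x' y' y, dist_comm x x']

theorem diam_le_diam_add_of_hyperMap_iterate_dist_lt {f : X → X} (hf : Isometry f)
    (hf' : Continuous f) {B K L : NonemptyCompacts X} {m n : ℕ} {ε : ℝ}
    (hK : dist ((hyperMap f hf')^[m] B) K < ε) (hL : dist ((hyperMap f hf')^[n] B) L < ε) :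
    diam (L : Set X) ≤ diam (K : Set X) + 4 * ε := by
  have hBL := NonemptyCompacts.diam_le_diam_add_of_dist_lt hL
  have hKB := NonemptyCompacts.diam_le_diam_add_of_dist_lt (dist_comm K _ ▸ hK)
  rw [diam_hyperMap_iterate hf] at hBL hKB
  linarith

end Hyperspace

section Circle

variable (p : ℝ)

theorem AddCircle.lipschitzWith_coe : LipschitzWith 1 ((↑) : ℝ → AddCircle p) :=
  LipschitzWith.of_dist_le_mul fun x y => by
    rw [NNReal.coe_one, one_mul, dist_eq_norm, dist_eq_norm, ← AddCircle.coe_sub]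
    exact QuotientAddGroup.norm_mk_le_norm

def circleArc (c : ℝ) {r : ℝ} (hr : 0 ≤ r) : NonemptyCompacts (AddCircle p) :=
  ⟨⟨(↑) '' Icc (c - r) (c + r), isCompact_Icc.image (AddCircle.continuous_mk' p)⟩,
    (nonempty_Icc.2 (by linarith)).image _⟩

variable {p}

theorem hyperMap_add_circleArc (a c : ℝ) {r : ℝ} (hr : 0 ≤ r) :
    hyperMap (· + (a : AddCircle p)) (continuous_add_const _) (circleArc p c hr) =
      circleArc p (c + a) hr := by
  apply NonemptyCompacts.ext
  change (· + (a : AddCircle p)) '' ((↑) '' Icc (c - r) (c + r)) =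
    (↑) '' Icc (c + a - r) (c + a + r)
  rw [image_image]
  simp only [← AddCircle.coe_add]
  rw [← image_image ((↑) : ℝ → AddCircle p) (· + a), image_add_const_Icc]
  ring_nf

theorem dist_circleArc_le (c : ℝ) {ρ σ : ℝ} (hρ : 0 ≤ ρ) (hσ : 0 ≤ σ) (hρσ : ρ ≤ σ) :
    dist (circleArc p c hρ) (circleArc p c hσ) ≤ σ - ρ := by
  rw [NonemptyCompacts.dist_eq]
  exact hausdorffDist_image_Icc_le (AddCircle.lipschitzWith_coe p) c hρ hρσ

theorem diam_circleArc_le (c : ℝ) {r : ℝ} (hr : 0 ≤ r) :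
    diam (circleArc p c hr : Set (AddCircle p)) ≤ 2 * r :=
  calc _ ≤ 1 * diam (Icc (c - r) (c + r)) :=
        (AddCircle.lipschitzWith_coe p).diam_image_le _ (isBounded_Icc _ _)
    _ = 2 * r := by rw [Real.diam_Icc (by linarith)]; ring

theorem abs_half_le_diam_circleArc (c : ℝ) {r : ℝ} (hr : 0 ≤ r) (hpr : |p| / 2 ≤ r) :
    |p| / 2 ≤ diam (circleArc p c hr : Set (AddCircle p)) := by
  have hmem : ∀ t ∈ Icc (c - r) (c + r), (t : AddCircle p) ∈ (circleArc p c hr : Set _) :=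
    fun t ht => mem_image_of_mem _ ht
  calc |p| / 2 = dist ((c + p / 2 : ℝ) : AddCircle p) (c : AddCircle p) := by
        rw [dist_eq_norm, ← AddCircle.coe_sub, add_sub_cancel_left, AddCircle.norm_half_period_eq]
    _ ≤ _ := dist_le_diam_of_mem (circleArc p c hr).isCompact.isBounded
        (hmem _ ⟨by linarith [neg_abs_le p], by linarith [le_abs_self p]⟩)
        (hmem _ ⟨by linarith, by linarith⟩)

theorem exists_rotation_pseudoOrbit_diam_zero_to_half_period (a : ℝ) {δ : ℝ} (hδ : 0 < δ) :
    ∃ A : ℕ → NonemptyCompacts (AddCircle p),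
      (∀ i, dist (hyperMap (· + (a : AddCircle p)) (continuous_add_const _) (A i)) (A (i + 1))
        < δ) ∧
      diam (A 0 : Set (AddCircle p)) = 0 ∧ ∃ N, |p| / 2 ≤ diam (A N : Set (AddCircle p)) := by
  set r : ℕ → ℝ := fun i => min (i * (δ / 2)) (|p| / 2)
  have hr : ∀ i, 0 ≤ r i := fun i => le_min (by positivity) (by positivity)
  refine ⟨fun i => circleArc p (i * a) (hr i), fun i => ?_, ?_, ⌈|p| / δ⌉₊, ?_⟩
  · have hsucc : r (i + 1) = min (i * (δ / 2) + δ / 2) (|p| / 2) := by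
      simp only [r]; push_cast; ring_nf
    have hmono : r i ≤ r (i + 1) := hsucc ▸ min_le_min_right _ (by linarith)
    have hstep : r (i + 1) ≤ r i + δ / 2 :=
      calc r (i + 1) ≤ min (i * (δ / 2) + δ / 2) (|p| / 2 + δ / 2) :=
            hsucc ▸ min_le_min_left _ (by linarith)
        _ = r i + δ / 2 := min_add_add_right _ _ _
    dsimp only
    rw [hyperMap_add_circleArc, show ((i + 1 : ℕ) : ℝ) * a = i * a + a by push_cast; ring]
    calc _ ≤ r (i + 1) - r i := dist_circleArc_le _ _ _ hmono
      _ < δ := by linarith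
  · have hr0 : r 0 = 0 := by
      simp only [r, Nat.cast_zero, zero_mul]
      exact min_eq_left (by positivity)
    exact le_antisymm ((diam_circleArc_le _ _).trans (by rw [hr0, mul_zero])) diam_nonneg
  · refine abs_half_le_diam_circleArc _ _ (le_min ?_ le_rfl)
    have hN : |p| ≤ ⌈|p| / δ⌉₊ * δ := (div_le_iff₀ hδ).1 (Nat.le_ceil _)
    linarith

end Circle

theorem circle_rotation_hyperspace_not_firstWeakShadowing_general
    (α : ℝ) :
    ¬ (∀ ε > (0:ℝ), ∃ δ > (0:ℝ), ∀ A : ℕ → NonemptyCompacts (AddCircle (1:ℝ)),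
      (∀ i, dist (hyperMap (fun x => x + (α : AddCircle (1:ℝ)))
          (continuous_add_right _) (A i)) (A (i + 1)) < δ) →
      ∃ B : NonemptyCompacts (AddCircle (1:ℝ)),
        ∀ i, ∃ n : ℕ,
          dist ((hyperMap (fun x => x + (α : AddCircle (1:ℝ)))
            (continuous_add_right _))^[n] B) (A i) < ε) := by
  intro h
  obtain ⟨δ, hδ, H⟩ := h (1 / 10) (by norm_num)
  obtain ⟨A, hA, hA0, N, hAN⟩ := exists_rotation_pseudoOrbit_diam_zero_to_half_period α hδ
  obtain ⟨B, hB⟩ := H A hA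
  obtain ⟨m, hm⟩ := hB 0
  obtain ⟨n, hn⟩ := hB N
  have hdiam := diam_le_diam_add_of_hyperMap_iterate_dist_lt (isometry_add_right _) _ hm hn
  norm_num at hAN
  linarith

/-- for an irrational rotation f of the circle ℝ/ℤ, the induced hyperspace
system (2^{ℝ/ℤ}, 2ᶠ) does not have first weak shadowing: there is ε > 0 such that for
every δ > 0 some δ-pseudo-orbit (Aᵢ) is not contained in the ε-neighbourhood of any
orbit closure, i.e. some Aᵢ is ε-far from every point of the orbit of any B. -/
theorem circle_rotation_hyperspace_not_firstWeakShadowing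
    (α : ℝ) (hα : Irrational α) :
    ¬ (∀ ε > (0:ℝ), ∃ δ > (0:ℝ), ∀ A : ℕ → NonemptyCompacts (AddCircle (1:ℝ)),
      (∀ i, dist (hyperMap (fun x => x + (α : AddCircle (1:ℝ)))
          (continuous_add_right _) (A i)) (A (i + 1)) < δ) →
      ∃ B : NonemptyCompacts (AddCircle (1:ℝ)),
        ∀ i, ∃ n : ℕ,
          dist ((hyperMap (fun x => x + (α : AddCircle (1:ℝ)))
            (continuous_add_right _))^[n] B) (A i) < ε) :=
  circle_rotation_hyperspace_not_firstWeakShadowing_general α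
end
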